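/- Under the hypotheses of the previous degenerate hyperbolic estimate (0 ≤ c(t) ≤ μ₂ measurable, 4δ²λ^{4σ-2} ≥ μ₂, δ, λ, σ > 0), the derivative of the solution u of u'' + 2δλ^{2σ}u' + λ²c(t)u = 0 satisfies |u'(t)|² ≤ (2 + μ₂²/(δ⁴λ^{8σ-4}))u₁² + (3μ₂²/(2δ²λ^{4σ-4}))u₀² for all t ≥ 0. -/

import Mathlib

/-!
With `k = 2δλ^{2σ}` and `γ = λ²c`, the hypothesis `4δ²λ^{4σ-2} ≥ μ₂` says `0 ≤ γ ≤ k²`. Under this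
condition the energy `k²u² + 2kuu' + 2u'²` is non-increasing, and since it dominates `k²u²/2` this
bounds `u²` by `3u₀² + 8u₁²/k²`. The derivative then solves `u'' + ku' = -γu` with a bounded
right-hand side `|γu| ≤ M`, and comparing `e^{ks}u'(s)` with `e^{ks}M/k` gives
`|u'| ≤ max |u₁| (M/k)`.
-/

open Real Set

theorem Real.rpow_mul_natCast_sub_natCast {x : ℝ} (hx : 0 < x) (y : ℝ) (n m : ℕ) :
    x ^ (y * n - m) = (x ^ y) ^ n / x ^ m := by
  rw [Real.rpow_sub hx, Real.rpow_mul_natCast hx.le, Real.rpow_natCast]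

section FirstOrderComparison

variable {k M : ℝ} {v v' : ℝ → ℝ}

theorem le_max_of_deriv_add_mul_le (hk : 0 < k) (hv : ∀ t, HasDerivAt v (v' t) t)
    (hM : ∀ t ≥ 0, v' t + k * v t ≤ M) {t : ℝ} (ht : 0 ≤ t) : v t ≤ max (v 0) (M / k) := by
  set G : ℝ → ℝ := fun s => exp (k * s) * (v s - M / k)
  have hG : ∀ s, HasDerivAt G (exp (k * s) * (v' s + k * v s - M)) s := fun s => by
    have hexp : HasDerivAt (fun s => exp (k * s)) (exp (k * s) * k) s := by
      simpa using ((hasDerivAt_id s).const_mul k).exp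
    refine (hexp.mul ((hv s).sub_const (M / k))).congr_deriv ?_
    field_simp
    ring
  have hG_anti : AntitoneOn G (Ici 0) := by
    refine antitoneOn_of_hasDerivWithinAt_nonpos (convex_Ici 0)
      (fun s _ => (hG s).continuousAt.continuousWithinAt)
      (fun s _ => (hG s).hasDerivWithinAt) fun s hs => ?_
    rw [interior_Ici] at hs
    exact mul_nonpos_of_nonneg_of_nonpos (exp_pos _).le (by linarith [hM s hs.le])
  have hGt : exp (k * t) * (v t - M / k) ≤ v 0 - M / k := by
    simpa [G] using hG_anti self_mem_Ici ht ht
  have hexp : 1 ≤ exp (k * t) := one_le_exp (by positivity)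
  by_contra! hlt
  have hpos : 0 < v t - M / k := by linarith [le_max_right (v 0) (M / k)]
  nlinarith [le_max_left (v 0) (M / k)]

theorem abs_le_max_of_abs_deriv_add_mul_le (hk : 0 < k) (hv : ∀ t, HasDerivAt v (v' t) t)
    (hM : ∀ t ≥ 0, |v' t + k * v t| ≤ M) {t : ℝ} (ht : 0 ≤ t) :
    |v t| ≤ max |v 0| (M / k) := by
  have hup := le_max_of_deriv_add_mul_le hk hv (fun s hs => (le_abs_self _).trans (hM s hs)) ht
  have hlow : -v t ≤ max (-v 0) (M / k) :=
    le_max_of_deriv_add_mul_le (v := fun s => -v s) (v' := fun s => -v' s) hk (fun s => (hv s).neg)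
      (fun s hs => by linarith [(neg_le_abs _).trans (hM s hs)]) ht
  rw [abs_le]
  constructor
  · linarith [max_le_max (neg_le_abs (v 0)) (le_refl (M / k))]
  · linarith [max_le_max (le_abs_self (v 0)) (le_refl (M / k))]

end FirstOrderComparison

section DampedOscillator

variable {k : ℝ} {γ u u' u'' : ℝ → ℝ}

def dampedEnergy (k : ℝ) (u u' : ℝ → ℝ) (s : ℝ) : ℝ :=
  k ^ 2 * u s ^ 2 + 2 * k * (u s * u' s) + 2 * u' s ^ 2

theorem hasDerivAt_dampedEnergy (hu : ∀ t, HasDerivAt u (u' t) t)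
    (hu' : ∀ t, HasDerivAt u' (u'' t) t) (s : ℝ) :
    HasDerivAt (dampedEnergy k u u')
      (2 * k ^ 2 * u s * u' s + 2 * k * (u' s ^ 2 + u s * u'' s) + 4 * u' s * u'' s) s := by
  have h := ((((hu s).pow 2).const_mul (k ^ 2)).add (((hu s).mul (hu' s)).const_mul (2 * k))).add
    (((hu' s).pow 2).const_mul 2)
  exact h.congr_deriv (by push_cast; ring)

theorem antitoneOn_dampedEnergy (hk : 0 < k) (hγ : ∀ t ≥ 0, 0 ≤ γ t ∧ γ t ≤ k ^ 2)
    (hu : ∀ t, HasDerivAt u (u' t) t) (hu' : ∀ t, HasDerivAt u' (u'' t) t)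
    (hode : ∀ t ≥ 0, u'' t + k * u' t + γ t * u t = 0) :
    AntitoneOn (dampedEnergy k u u') (Ici 0) := by
  refine antitoneOn_of_hasDerivWithinAt_nonpos (convex_Ici 0)
    (fun s _ => (hasDerivAt_dampedEnergy hu hu' s).continuousAt.continuousWithinAt)
    (fun s _ => (hasDerivAt_dampedEnergy hu hu' s).hasDerivWithinAt) fun s hs => ?_
  rw [interior_Ici] at hs
  obtain ⟨hγ₀, hγk⟩ := hγ s hs.le
  have hu'' : u'' s = -(k * u' s + γ s * u s) := by linarith [hode s hs.le]
  -- `k` times the derivative is `-2 ((k u' + γ u)² + γ (k² - γ) u²)`.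
  rw [hu'']
  nlinarith [sq_nonneg (k * u' s + γ s * u s),
    mul_nonneg (mul_nonneg hγ₀ (sub_nonneg.2 hγk)) (sq_nonneg (u s))]

theorem sq_le_of_dampedOscillator (hk : 0 < k) (hγ : ∀ t ≥ 0, 0 ≤ γ t ∧ γ t ≤ k ^ 2)
    (hu : ∀ t, HasDerivAt u (u' t) t) (hu' : ∀ t, HasDerivAt u' (u'' t) t)
    (hode : ∀ t ≥ 0, u'' t + k * u' t + γ t * u t = 0) {t : ℝ} (ht : 0 ≤ t) :
    u t ^ 2 ≤ 3 * u 0 ^ 2 + 8 * u' 0 ^ 2 / k ^ 2 := by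
  have hE := antitoneOn_dampedEnergy hk hγ hu hu' hode self_mem_Ici ht ht
  simp only [dampedEnergy] at hE
  rw [← sub_le_iff_le_add', le_div_iff₀ (by positivity)]
  nlinarith [sq_nonneg (k * u t + 2 * u' t), sq_nonneg (k * u 0 - 2 * u' 0)]

theorem deriv_sq_le_of_dampedOscillator (hk : 0 < k) {Γ : ℝ}
    (hγ : ∀ t ≥ 0, 0 ≤ γ t ∧ γ t ≤ Γ) (hΓ : Γ ≤ k ^ 2)
    (hu : ∀ t, HasDerivAt u (u' t) t) (hu' : ∀ t, HasDerivAt u' (u'' t) t)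
    (hode : ∀ t ≥ 0, u'' t + k * u' t + γ t * u t = 0) {t : ℝ} (ht : 0 ≤ t) :
    u' t ^ 2 ≤ u' 0 ^ 2 + (Γ / k) ^ 2 * (3 * u 0 ^ 2 + 8 * u' 0 ^ 2 / k ^ 2) := by
  have hΓ₀ : 0 ≤ Γ := (hγ 0 le_rfl).1.trans (hγ 0 le_rfl).2
  set B := √(3 * u 0 ^ 2 + 8 * u' 0 ^ 2 / k ^ 2)
  have hB : ∀ s ≥ 0, |u s| ≤ B := fun s hs => Real.abs_le_sqrt
    (sq_le_of_dampedOscillator hk (fun t ht => ⟨(hγ t ht).1, (hγ t ht).2.trans hΓ⟩) hu hu' hode hs)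
  have hforce : ∀ s ≥ 0, |u'' s + k * u' s| ≤ Γ * B := fun s hs => by
    rw [show u'' s + k * u' s = -(γ s * u s) by linarith [hode s hs], abs_neg, abs_mul,
      abs_of_nonneg (hγ s hs).1]
    exact mul_le_mul (hγ s hs).2 (hB s hs) (abs_nonneg _) hΓ₀
  have hmax := abs_le_max_of_abs_deriv_add_mul_le hk hu' hforce ht
  have hsq : u' t ^ 2 ≤ u' 0 ^ 2 + (Γ * B / k) ^ 2 := by
    rw [← sq_abs (u' t), ← sq_abs (u' 0)]
    rcases max_cases |u' 0| (Γ * B / k) with ⟨hm, -⟩ | ⟨hm, -⟩ <;> rw [hm] at hmax <;>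
      nlinarith [abs_nonneg (u' t)]
  have hB2 : B ^ 2 = 3 * u 0 ^ 2 + 8 * u' 0 ^ 2 / k ^ 2 := Real.sq_sqrt (by positivity)
  calc u' t ^ 2 ≤ u' 0 ^ 2 + (Γ * B / k) ^ 2 := hsq
    _ = _ := by rw [← hB2]; ring

end DampedOscillator

theorem stmt2_general (δ l σ μ₂ : ℝ) (hδ : 0 < δ) (hl : 0 < l)
    (c : ℝ → ℝ)
    (hc : ∀ t ≥ (0:ℝ), 0 ≤ c t ∧ c t ≤ μ₂)
    (hmain : 4 * δ ^ 2 * l ^ (4*σ - 2) ≥ μ₂)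
    (u u' u'' : ℝ → ℝ)
    (hu : ∀ t, HasDerivAt u (u' t) t) (hu' : ∀ t, HasDerivAt u' (u'' t) t)
    (hode : ∀ t ≥ (0:ℝ), u'' t + 2 * δ * l ^ (2*σ) * u' t + l ^ 2 * c t * u t = 0)
    (u₀ u₁ : ℝ) (h0 : u 0 = u₀) (h1 : u' 0 = u₁) :
    ∀ t ≥ (0:ℝ),
      (u' t) ^ 2 ≤ (2 + μ₂ ^ 2 / (δ ^ 4 * l ^ (8*σ - 4))) * u₁ ^ 2
        + (3 * μ₂ ^ 2 / (2 * δ ^ 2 * l ^ (4*σ - 4))) * u₀ ^ 2 := by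
  intro t ht
  have hpow : ∀ (n m : ℕ) (a : ℝ), a = 2 * σ * n - m → l ^ a = (l ^ (2 * σ)) ^ n / l ^ m :=
    fun n m a ha => ha ▸ Real.rpow_mul_natCast_sub_natCast hl _ n m
  rw [hpow 2 2 (4 * σ - 2) (by push_cast; ring)] at hmain
  have hΓ : l ^ 2 * μ₂ ≤ (2 * δ * l ^ (2 * σ)) ^ 2 :=
    calc l ^ 2 * μ₂ ≤ l ^ 2 * (4 * δ ^ 2 * ((l ^ (2 * σ)) ^ 2 / l ^ 2)) :=
          mul_le_mul_of_nonneg_left hmain (sq_nonneg l)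
      _ = _ := by field_simp; ring
  have hbound := deriv_sq_le_of_dampedOscillator (γ := fun s => l ^ 2 * c s) (by positivity)
    (fun s hs => ⟨mul_nonneg (sq_nonneg l) (hc s hs).1,
      mul_le_mul_of_nonneg_left (hc s hs).2 (sq_nonneg l)⟩) hΓ hu hu' hode ht
  rw [h0, h1] at hbound
  calc u' t ^ 2 ≤ _ := hbound
    _ ≤ 2 * _ := le_mul_of_one_le_left (by positivity) one_le_two
    _ = _ := by
      rw [hpow 4 4 (8 * σ - 4) (by push_cast; ring), hpow 2 4 (4 * σ - 4) (by push_cast; ring)]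
      field_simp
      ring

theorem stmt2 (δ l σ μ₂ : ℝ) (hδ : 0 < δ) (hl : 0 < l) (hσ : 0 < σ)
    (c : ℝ → ℝ) (hc_meas : Measurable c)
    (hc : ∀ t ≥ (0:ℝ), 0 ≤ c t ∧ c t ≤ μ₂)
    (hmain : 4 * δ ^ 2 * l ^ (4*σ - 2) ≥ μ₂)
    (u u' u'' : ℝ → ℝ)
    (hu : ∀ t, HasDerivAt u (u' t) t) (hu' : ∀ t, HasDerivAt u' (u'' t) t)
    (hode : ∀ t ≥ (0:ℝ), u'' t + 2 * δ * l ^ (2*σ) * u' t + l ^ 2 * c t * u t = 0)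
    (u₀ u₁ : ℝ) (h0 : u 0 = u₀) (h1 : u' 0 = u₁) :
    ∀ t ≥ (0:ℝ),
      (u' t) ^ 2 ≤ (2 + μ₂ ^ 2 / (δ ^ 4 * l ^ (8*σ - 4))) * u₁ ^ 2
        + (3 * μ₂ ^ 2 / (2 * δ ^ 2 * l ^ (4*σ - 4))) * u₀ ^ 2 :=
  stmt2_general δ l σ μ₂ hδ hl c hc hmain u u' u'' hu hu' hode u₀ u₁ h0 h1
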